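/- arXiv:1105.0600 — 2 statements merged into one kernel-verified Lean document; each statement's English description precedes it below -/
import Mathlib

section
/- Every autoreduced subset of the differential polynomial ring k{X} in finitely many differential indeterminates over a differential field is finite. -/
/-!
Distinct elements of an autoreduced set have leaders that are not derivatives of one another:
equal leaders would force each element to have smaller degree in it than the other, and a proper
derivative of one leader occurring as the other is excluded by reducedness. By Dickson's lemma,
together with the pigeonhole principle on the finitely many differential indeterminates, the
relation "is a derivative of" on `DVar m n` is a well-quasi-order, so it admits no infinite
set of pairwise unrelated elements.
-/

open MvPolynomial

/-- The algebraic indeterminates `θX_i` of the differential polynomial ring in `n`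
differential indeterminates with `m` commuting derivations: a pair of the index `i`
and the multi-exponent of the derivation operator `θ`. -/
abbrev DVar (m n : ℕ) := Fin n × (Fin m →₀ ℕ)

/-- The order of a derivation operator (multi-exponent). -/
def opOrder {m : ℕ} (e : Fin m →₀ ℕ) : ℕ := e.sum fun _ k => k

/-- Lexicographic comparison of derivation multi-exponents. -/
def expLexLt {m : ℕ} (e f : Fin m →₀ ℕ) : Prop :=
  ∃ j : Fin m, e j < f j ∧ ∀ j' : Fin m, j' < j → e j' = f j'

/-- The ranking of the algebraic indeterminates:
`δ^e X_i < δ^f X_j` iff `(Σe, i, e) < (Σf, j, f)` lexicographically. -/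
def varLt {m n : ℕ} (v w : DVar m n) : Prop :=
  opOrder v.2 < opOrder w.2 ∨
    (opOrder v.2 = opOrder w.2 ∧
      (v.1 < w.1 ∨ (v.1 = w.1 ∧ expLexLt v.2 w.2)))

variable {m n : ℕ} {k : Type} [CommRing k]

/-- `v` is the leader of the differential polynomial `f`: it occurs in `f` and every other
indeterminate occurring in `f` has strictly lower rank.  (Constants have no leader.) -/
def IsLeader (f : MvPolynomial (DVar m n) k) (v : DVar m n) : Prop :=
  v ∈ f.vars ∧ ∀ w ∈ f.vars, w ≠ v → varLt w v

/-- `rankLt f g`: the rank of `f` (the pair (leader, degree in the leader), with constants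
ranked lowest) is strictly smaller than the rank of `g`. -/
def rankLt (f g : MvPolynomial (DVar m n) k) : Prop :=
  ((∀ v, ¬ IsLeader f v) ∧ ∃ w, IsLeader g w) ∨
  (∃ v, IsLeader f v ∧ IsLeader g v ∧ degreeOf v f < degreeOf v g) ∨
  (∃ v w, IsLeader f v ∧ IsLeader g w ∧ varLt v w)

/-- `f` and `g` have the same rank. -/
def rankEq (f g : MvPolynomial (DVar m n) k) : Prop :=
  ((∀ v, ¬ IsLeader f v) ∧ ∀ v, ¬ IsLeader g v) ∨
  (∃ v, IsLeader f v ∧ IsLeader g v ∧ degreeOf v f = degreeOf v g)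

/-- The coefficient of the highest power of the variable `v` in `f`
(the initial of `f` when `v` is the leader of `f`). -/
noncomputable def initialAt (v : DVar m n) (f : MvPolynomial (DVar m n) k) :
    MvPolynomial (DVar m n) k :=
  ∑ μ ∈ f.support.filter (fun μ => μ v = degreeOf v f),
    monomial (μ.erase v) (coeff μ f)

/-- `u` is a proper derivative of the indeterminate `w`. -/
def IsProperDerivOf (w u : DVar m n) : Prop :=
  u.1 = w.1 ∧ w.2 ≤ u.2 ∧ u.2 ≠ w.2

/-- `f` is reduced with respect to `g`: no proper derivative of the leader of `g` occurs
in `f`, and the degree of `f` in the leader of `g` is smaller than that of `g`. -/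
def ReducedWrt (f g : MvPolynomial (DVar m n) k) : Prop :=
  ∀ v, IsLeader g v →
    (∀ u ∈ f.vars, ¬ IsProperDerivOf v u) ∧ degreeOf v f < degreeOf v g

/-- A set of differential polynomials is autoreduced if each element is reduced with
respect to every other element. -/
def Autoreduced (Λ : Set (MvPolynomial (DVar m n) k)) : Prop :=
  ∀ f ∈ Λ, ∀ g ∈ Λ, f ≠ g → ReducedWrt f g

/-- The extension of the derivation `δ_j` (given by `d j` on coefficients) to the
differential polynomial ring. -/
noncomputable def diffD (d : Fin m → k → k) (j : Fin m)
    (p : MvPolynomial (DVar m n) k) : MvPolynomial (DVar m n) k :=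
  (∑ μ ∈ p.support, monomial μ (d j (coeff μ p))) +
    ∑ᶠ v : DVar m n, pderiv v p * X (v.1, v.2 + Finsupp.single j 1)

theorem Finite.of_wellQuasiOrdered_of_rel_imp_eq {α β : Type*} {r : α → α → Prop}
    (hr : WellQuasiOrdered r) (f : β → α) (hf : ∀ a b, r (f a) (f b) → a = b) : Finite β := by
  by_contra hβ
  have : Infinite β := not_finite_iff_infinite.mp hβ
  obtain ⟨i, j, hij, hrij⟩ := hr (f ∘ Infinite.natEmbedding β)
  exact hij.ne ((Infinite.natEmbedding β).injective (hf _ _ hrij))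

def IsDerivOf (w u : DVar m n) : Prop :=
  w.1 = u.1 ∧ w.2 ≤ u.2

theorem wellQuasiOrdered_isDerivOf : WellQuasiOrdered (IsDerivOf (m := m) (n := n)) :=
  (Finite.wellQuasiOrdered _).prod wellQuasiOrdered_le

theorem Autoreduced.eq_of_isDerivOf {Λ : Set (MvPolynomial (DVar m n) k)} (hΛ : Autoreduced Λ)
    {f g : MvPolynomial (DVar m n) k} (hf : f ∈ Λ) (hg : g ∈ Λ) {v w : DVar m n}
    (hv : IsLeader f v) (hw : IsLeader g w) (hvw : IsDerivOf v w) : f = g := by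
  by_contra hne
  obtain ⟨hno_deriv, hdeg⟩ := hΛ g hg f hf (Ne.symm hne) v hv
  by_cases hvw₂ : w.2 = v.2
  · obtain rfl : w = v := Prod.ext hvw.1.symm hvw₂
    exact (hdeg.trans (hΛ f hf g hg hne w hw).2).false
  · exact hno_deriv w hw.1 ⟨hvw.1.symm, hvw.2, hvw₂⟩

theorem autoreduced_finite_general {m n : ℕ} {k : Type} [Field k]
    (Λ : Set (MvPolynomial (DVar m n) k))
    (hnc : ∀ f ∈ Λ, ∃ v, IsLeader f v)
    (hred : Autoreduced Λ) :
    Λ.Finite := by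
  choose leader hleader using fun f : Λ => hnc f f.2
  have : Finite Λ := Finite.of_wellQuasiOrdered_of_rel_imp_eq wellQuasiOrdered_isDerivOf leader
    fun f g hfg => Subtype.ext (hred.eq_of_isDerivOf f.2 g.2 (hleader f) (hleader g) hfg)
  exact Λ.toFinite

/-- Every autoreduced subset of the differential polynomial ring `k{X}` in finitely many
differential indeterminates over a differential field is finite.  (Here, following Kolchin,
the members of an autoreduced set are required to be nonconstant, i.e. to have a leader.) -/
theorem autoreduced_finite {m n : ℕ} {k : Type} [Field k] [CharZero k]
    (Λ : Set (MvPolynomial (DVar m n) k))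
    (hnc : ∀ f ∈ Λ, ∃ v, IsLeader f v)
    (hred : Autoreduced Λ) :
    Λ.Finite :=
  autoreduced_finite_general Λ hnc hred
end

section
/- Let K = ∏_𝒰 K_r be an ultraproduct of fields and K[Z]_int = ∏_𝒰 K_r[Z] the internal polynomial ring in countably many variables, viewed as an extension of K[Z]. For any ideal I of K[Z] and any g ∈ K[Z]: if g^N lies in the extension I·K[Z]_int for some internal natural number N ∈ ℕ*, then g lies in the radical √I of I in K[Z]. -/
open Filter

variable {ι : Type} (𝒰 : Ultrafilter ι)

/-- The setoid identifying `ι`-indexed families agreeing almost everywhere w.r.t. `𝒰`. -/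
def upSetoid (R : ι → Type) : Setoid (∀ i, R i) where
  r a b := ∀ᶠ i in (𝒰 : Filter ι), a i = b i
  iseqv := ⟨fun _ => Eventually.of_forall fun _ => rfl,
    fun h => h.mono fun _ e => e.symm,
    fun h1 h2 => h2.mp (h1.mono fun _ e1 e2 => e1.trans e2)⟩

/-- The ultraproduct `∏_𝒰 R i`. -/
def UProd (R : ι → Type) : Type := Quotient (upSetoid 𝒰 R)

/-- The class of the family `a` in the ultraproduct. -/
def UProd.mk {R : ι → Type} (a : ∀ i, R i) : UProd 𝒰 R := Quotient.mk (upSetoid 𝒰 R) a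

variable (R : ι → Type) [∀ i, CommRing (R i)]

instance : Zero (UProd 𝒰 R) := ⟨UProd.mk 𝒰 fun _ => 0⟩
instance : One (UProd 𝒰 R) := ⟨UProd.mk 𝒰 fun _ => 1⟩

instance : Add (UProd 𝒰 R) :=
  ⟨Quotient.map₂ (fun a b i => a i + b i) (by
    intro a a' ha b b' hb
    exact (ha.and hb).mono fun i ⟨h1, h2⟩ => by simp only [h1, h2])⟩

instance : Mul (UProd 𝒰 R) :=
  ⟨Quotient.map₂ (fun a b i => a i * b i) (by
    intro a a' ha b b' hb
    exact (ha.and hb).mono fun i ⟨h1, h2⟩ => by simp only [h1, h2])⟩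

instance : Neg (UProd 𝒰 R) :=
  ⟨Quotient.map (fun a i => - a i) (by
    intro a a' ha
    exact ha.mono fun i h1 => by simp only [h1])⟩

/-- The ultraproduct of commutative rings is a commutative ring (coordinatewise a.e.). -/
instance instCommRingUProd : CommRing (UProd 𝒰 R) where
  add := (· + ·)
  mul := (· * ·)
  neg := (- ·)
  zero := 0
  one := 1
  add_assoc := by
    rintro ⟨a⟩ ⟨b⟩ ⟨c⟩
    exact Quotient.sound (Eventually.of_forall fun i => add_assoc _ _ _)
  zero_add := by
    rintro ⟨a⟩
    exact Quotient.sound (Eventually.of_forall fun i => zero_add _)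
  add_zero := by
    rintro ⟨a⟩
    exact Quotient.sound (Eventually.of_forall fun i => add_zero _)
  add_comm := by
    rintro ⟨a⟩ ⟨b⟩
    exact Quotient.sound (Eventually.of_forall fun i => add_comm _ _)
  mul_assoc := by
    rintro ⟨a⟩ ⟨b⟩ ⟨c⟩
    exact Quotient.sound (Eventually.of_forall fun i => mul_assoc _ _ _)
  one_mul := by
    rintro ⟨a⟩
    exact Quotient.sound (Eventually.of_forall fun i => one_mul _)
  mul_one := by
    rintro ⟨a⟩
    exact Quotient.sound (Eventually.of_forall fun i => mul_one _)
  zero_mul := by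
    rintro ⟨a⟩
    exact Quotient.sound (Eventually.of_forall fun i => zero_mul _)
  mul_zero := by
    rintro ⟨a⟩
    exact Quotient.sound (Eventually.of_forall fun i => mul_zero _)
  left_distrib := by
    rintro ⟨a⟩ ⟨b⟩ ⟨c⟩
    exact Quotient.sound (Eventually.of_forall fun i => left_distrib _ _ _)
  right_distrib := by
    rintro ⟨a⟩ ⟨b⟩ ⟨c⟩
    exact Quotient.sound (Eventually.of_forall fun i => right_distrib _ _ _)
  mul_comm := by
    rintro ⟨a⟩ ⟨b⟩
    exact Quotient.sound (Eventually.of_forall fun i => mul_comm _ _)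
  neg_add_cancel := by
    rintro ⟨a⟩
    exact Quotient.sound (Eventually.of_forall fun i => neg_add_cancel _)
  nsmul := nsmulRec
  zsmul := zsmulRec

/-- The internal subset of the ultraproduct with components `A i`: an element belongs to it
iff its coordinates belong to the components almost everywhere. -/
def internalSet (A : ∀ i, Set (R i)) : Set (UProd 𝒰 R) :=
  {x | Quotient.liftOn x (fun a => ∀ᶠ i in (𝒰 : Filter ι), a i ∈ A i)
    (fun a b hab => propext
      ⟨fun h => (hab.and h).mono fun _ ⟨e, hi⟩ => e ▸ hi,
       fun h => (hab.and h).mono fun _ ⟨e, hi⟩ => e ▸ hi⟩)}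

variable (K : ι → Type) [∀ i, Field (K i)]

/-- The coordinatewise constants map from the ultraproduct field `K = ∏_𝒰 K i` into the
internal polynomial ring `∏_𝒰 K i[Z]`. -/
noncomputable def constHom : UProd 𝒰 K →+* UProd 𝒰 (fun i => MvPolynomial ℕ (K i)) where
  toFun := Quotient.map (fun a i => MvPolynomial.C (a i))
    (fun a b hab => hab.mono fun i e => by simp only [e])
  map_one' := Quotient.sound (Eventually.of_forall fun i => by simp)
  map_zero' := Quotient.sound (Eventually.of_forall fun i => by simp)
  map_mul' := by
    rintro ⟨a⟩ ⟨b⟩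
    exact Quotient.sound (Eventually.of_forall fun i => by simp)
  map_add' := by
    rintro ⟨a⟩ ⟨b⟩
    exact Quotient.sound (Eventually.of_forall fun i => by simp)

/-- The natural embedding of the polynomial ring `K[Z_i : i < ω]` over the ultraproduct
field `K = ∏_𝒰 K i` into the internal polynomial ring `∏_𝒰 K i[Z_j : j < ω]`, obtained by
unpacking the coefficients coordinatewise (it sends constants to coordinatewise constants
and each variable `Z_j` to the corresponding internal variable). -/
noncomputable def upPolyEmb :
    MvPolynomial ℕ (UProd 𝒰 K) →+* UProd 𝒰 (fun i => MvPolynomial ℕ (K i)) :=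
  MvPolynomial.eval₂Hom (constHom 𝒰 K) (fun j => UProd.mk 𝒰 fun _ => MvPolynomial.X j)


/-!
Suppose `g ∉ √I`. Finitely many elements of `I` already witness the hypothesis, so the
Nullstellensatz over the ultraproduct `L = ∏_𝒰 (K r)^alg`, algebraically closed by Łoś, gives a
point `x ∈ L^ω` where these generators vanish but `g` does not. Evaluating coordinatewise at
representatives of `x`, the internal power `g^N` vanishes at almost every coordinate, hence so
does `g`, each coordinate field being reduced; so `g(x) = 0`, a contradiction.
-/

namespace UProd

variable {ι : Type} {𝒰 : Ultrafilter ι}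

section Basic

variable {R : ι → Type}

theorem mk_out (x : UProd 𝒰 R) : mk 𝒰 (Quotient.out x) = x := Quotient.out_eq x

theorem mk_eq_mk_iff {a b : ∀ i, R i} : mk 𝒰 a = mk 𝒰 b ↔ ∀ᶠ i in (𝒰 : Filter ι), a i = b i :=
  Quotient.eq

end Basic

section CommRing

variable {R : ι → Type} [∀ i, CommRing (R i)]

theorem mk_eq_zero_iff {a : ∀ i, R i} : mk 𝒰 a = 0 ↔ ∀ᶠ i in (𝒰 : Filter ι), a i = 0 :=
  mk_eq_mk_iff

theorem mk_eq_zero_of_mk_pow_eq_zero [∀ i, IsReduced (R i)] {a : ∀ i, R i} {N : ι → ℕ}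
    (h : mk 𝒰 (fun i => a i ^ N i) = 0) : mk 𝒰 a = 0 :=
  mk_eq_zero_iff.2 <| (mk_eq_zero_iff.1 h).mono fun i hi => IsNilpotent.eq_zero ⟨N i, hi⟩

variable (𝒰 R) in
def mkRingHom : (∀ i, R i) →+* UProd 𝒰 R where
  toFun := mk 𝒰
  map_one' := rfl
  map_mul' _ _ := rfl
  map_zero' := rfl
  map_add' _ _ := rfl

theorem mkRingHom_apply (a : ∀ i, R i) : mkRingHom 𝒰 R a = mk 𝒰 a := rfl

theorem mkRingHom_surjective : Function.Surjective (mkRingHom 𝒰 R) := Quotient.mk_surjective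

variable {S : ι → Type} [∀ i, CommRing (S i)]

def map (f : ∀ i, R i →+* S i) : UProd 𝒰 R →+* UProd 𝒰 S where
  toFun := Quotient.map (fun a i => f i (a i)) fun _ _ h => h.mono fun i e => by simp only [e]
  map_one' := Quotient.sound (Eventually.of_forall fun i => map_one (f i))
  map_mul' := by
    rintro ⟨a⟩ ⟨b⟩
    exact Quotient.sound (Eventually.of_forall fun i => map_mul (f i) (a i) (b i))
  map_zero' := Quotient.sound (Eventually.of_forall fun i => map_zero (f i))
  map_add' := by
    rintro ⟨a⟩ ⟨b⟩
    exact Quotient.sound (Eventually.of_forall fun i => map_add (f i) (a i) (b i))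

theorem map_mk (f : ∀ i, R i →+* S i) (a : ∀ i, R i) :
    map f (mk 𝒰 a) = mk 𝒰 fun i => f i (a i) := rfl

end CommRing

section Field

variable {F : ι → Type} [∀ i, Field (F i)]

@[reducible]
noncomputable def field : Field (UProd 𝒰 F) where
  inv := Quotient.map (fun a i => (a i)⁻¹) fun _ _ h => h.mono fun i e => by simp only [e]
  exists_pair_ne := ⟨0, 1, fun h => by simpa using (mk_eq_mk_iff.1 h).exists⟩
  mul_inv_cancel := by
    rintro ⟨a⟩ ha
    have hne : ∀ᶠ i in (𝒰 : Filter ι), a i ≠ 0 :=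
      Ultrafilter.eventually_not.2 fun h => ha (mk_eq_zero_iff.2 h)
    exact Quotient.sound (hne.mono fun i h => mul_inv_cancel₀ h)
  inv_zero := Quotient.sound (Eventually.of_forall fun i => inv_zero)
  nnqsmul := _
  qsmul := _

attribute [local instance] field

open Polynomial in
theorem isAlgClosed [∀ i, IsAlgClosed (F i)] : IsAlgClosed (UProd 𝒰 F) := by
  refine IsAlgClosed.of_exists_root _ fun p hmonic hirr => ?_
  obtain ⟨P, rfl⟩ := map_surjective _ mkRingHom_surjective p
  set n := (P.map (mkRingHom 𝒰 F)).natDegree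
  have hdeg : ∀ᶠ i in (𝒰 : Filter ι), (P.map (Pi.evalRingHom F i)).degree ≠ 0 := by
    have hlead : mk 𝒰 (P.coeff n) = mk 𝒰 1 := by
      change mkRingHom 𝒰 F (P.coeff n) = 1
      rw [← coeff_map]
      exact hmonic
    refine (mk_eq_mk_iff.1 hlead).mono fun i hi => ?_
    have hcoeff : (P.map (Pi.evalRingHom F i)).coeff n ≠ 0 := by simp [coeff_map, hi]
    exact (natDegree_pos_iff_degree_pos.1
      (hirr.natDegree_pos.trans_le (le_natDegree_of_ne_zero hcoeff))).ne'
  have hroot : ∀ i, ∃ r : F i,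
      (P.map (Pi.evalRingHom F i)).degree ≠ 0 → (P.map (Pi.evalRingHom F i)).IsRoot r := by
    intro i
    by_cases h : (P.map (Pi.evalRingHom F i)).degree = 0
    · exact ⟨0, fun h' => (h' h).elim⟩
    · exact (IsAlgClosed.exists_root _ h).imp fun _ hr _ => hr
  choose r hr using hroot
  refine ⟨mk 𝒰 r, ?_⟩
  rw [eval_map, ← mkRingHom_apply, eval₂_at_apply, mkRingHom_apply, mk_eq_zero_iff]
  refine hdeg.mono fun i hi => ?_
  have hroot := (hr i hi).eq_zero
  rwa [eval_map, show r i = Pi.evalRingHom F i r from rfl, eval₂_at_apply] at hroot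

end Field

end UProd

theorem Ideal.exists_fg_le_and_mem_map {R S : Type*} [CommSemiring R] [Semiring S] (f : R →+* S)
    {I : Ideal R} {y : S} (hy : y ∈ I.map f) : ∃ J ≤ I, J.FG ∧ y ∈ J.map f := by
  classical
  obtain ⟨T, hT, hyT⟩ := Submodule.mem_span_finite_of_mem_span hy
  obtain ⟨T', hT'I, rfl⟩ := Finset.subset_set_image_iff.1 hT
  refine ⟨Ideal.span T', Ideal.span_le.2 hT'I, ⟨T', rfl⟩, ?_⟩
  rwa [Ideal.map_span, ← Finset.coe_image]

namespace MvPolynomial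

variable {k K σ : Type*} [Field k] [Field K] [Algebra k K] [IsAlgClosed K]

theorem exists_mem_zeroLocus_aeval_ne_zero_of_notMem_radical {J : Ideal (MvPolynomial σ k)}
    (hJ : J.FG) {g : MvPolynomial σ k} (hg : g ∉ J.radical) :
    ∃ x ∈ zeroLocus K J, aeval x g ≠ 0 := by
  classical
  obtain ⟨T, rfl⟩ := hJ
  -- The Nullstellensatz needs finitely many variables: `ψ` kills those outside the finite set `s`
  -- used by `g` and the generators, and `rename` undoes it on polynomials in the variables `s`.
  set s : Finset σ := g.vars ∪ T.biUnion vars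
  have hs : Function.Injective ((↑) : s → σ) := Subtype.val_injective
  set ψ := killCompl (R := k) hs
  have hfix : ∀ p : MvPolynomial σ k, p.vars ⊆ s → rename (↑) (ψ p) = p := by
    intro p hp
    obtain ⟨q, rfl⟩ := exists_rename_eq_of_vars_subset_range p _ hs (by simpa using hp)
    rw [killCompl_rename_app]
  have hψg : ψ g ∉ ((Ideal.span T).map ψ).radical := by
    rintro ⟨M, hM⟩
    refine hg ⟨M, ?_⟩
    have h := Ideal.mem_map_of_mem (rename ((↑) : s → σ)) hM
    rwa [Ideal.map_span, Ideal.map_span, Set.image_image, map_pow, hfix g Finset.subset_union_left,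
      Set.image_congr fun p hp => hfix p (Finset.subset_union_right.trans'
        (Finset.subset_biUnion_of_mem vars hp)), Set.image_id'] at h
  rw [← vanishingIdeal_zeroLocus_eq_radical (K := K), mem_vanishingIdeal_iff] at hψg
  push Not at hψg
  obtain ⟨x, hx, hxg⟩ := hψg
  have hcomp : (aeval x).comp ψ = aeval fun j => aeval x (ψ (X j)) :=
    algHom_ext fun j => by simp
  refine ⟨fun j => aeval x (ψ (X j)), fun p hp => ?_, ?_⟩
  · rw [← hcomp]
    exact hx _ (Ideal.mem_map_of_mem _ hp)
  · rwa [← hcomp]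

end MvPolynomial

section InternalEval

variable {ι : Type} {𝒰 : Ultrafilter ι} {K B : ι → Type} [∀ i, Field (K i)] [∀ i, CommRing (B i)]

noncomputable def upEval₂Hom (σ : ∀ i, K i →+* B i) (x : ℕ → UProd 𝒰 B) :
    UProd 𝒰 (fun i => MvPolynomial ℕ (K i)) →+* UProd 𝒰 B :=
  UProd.map fun i => MvPolynomial.eval₂Hom (σ i) fun j => Quotient.out (x j) i

theorem upEval₂Hom_comp_upPolyEmb (σ : ∀ i, K i →+* B i) (x : ℕ → UProd 𝒰 B) :
    (upEval₂Hom σ x).comp (upPolyEmb 𝒰 K) = MvPolynomial.eval₂Hom (UProd.map σ) x := by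
  refine MvPolynomial.ringHom_ext (fun a => ?_) fun j => ?_
  · rw [← UProd.mk_out a, RingHom.comp_apply, upPolyEmb, MvPolynomial.eval₂Hom_C,
      MvPolynomial.eval₂Hom_C]
    change UProd.mk 𝒰 (fun i => MvPolynomial.eval₂Hom (σ i) _ (MvPolynomial.C (a.out i))) = _
    simp only [MvPolynomial.eval₂Hom_C]
    rfl
  · rw [RingHom.comp_apply, upPolyEmb, MvPolynomial.eval₂Hom_X', MvPolynomial.eval₂Hom_X']
    change UProd.mk 𝒰 (fun i => MvPolynomial.eval₂Hom (σ i) _ (MvPolynomial.X j)) = _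
    simp only [MvPolynomial.eval₂Hom_X']
    exact UProd.mk_out (x j)

end InternalEval

theorem mem_radical_of_internal_pow_mem_general {ι : Type} (𝒰 : Ultrafilter ι)
    (K : ι → Type) [∀ i, Field (K i)]
    (I : Ideal (MvPolynomial ℕ (UProd 𝒰 K)))
    (g : MvPolynomial ℕ (UProd 𝒰 K))
    (N : ι → ℕ)
    (hpow : UProd.mk 𝒰 (fun i => (Quotient.out (upPolyEmb 𝒰 K g)) i ^ N i) ∈
      I.map (upPolyEmb 𝒰 K)) :
    g ∈ I.radical := by
  let L i := AlgebraicClosure (K i)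
  let σ i : K i →+* L i := algebraMap _ _
  let := UProd.field (𝒰 := 𝒰) (F := K)
  let := UProd.field (𝒰 := 𝒰) (F := L)
  have : IsAlgClosed (UProd 𝒰 L) := UProd.isAlgClosed
  let := (UProd.map (𝒰 := 𝒰) σ).toAlgebra
  by_contra hg
  obtain ⟨J, hJI, hJ, hpowJ⟩ := Ideal.exists_fg_le_and_mem_map _ hpow
  obtain ⟨x, hxJ, hxg⟩ := MvPolynomial.exists_mem_zeroLocus_aeval_ne_zero_of_notMem_radical
    (K := UProd 𝒰 L) hJ fun h => hg (Ideal.radical_mono hJI h)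
  have hE : ∀ p, upEval₂Hom σ x (upPolyEmb 𝒰 K p) = MvPolynomial.aeval x p := fun p => by
    rw [MvPolynomial.aeval_eq_eval₂Hom]
    exact RingHom.congr_fun (upEval₂Hom_comp_upPolyEmb σ x) p
  have hJE : J.map (upPolyEmb 𝒰 K) ≤ RingHom.ker (upEval₂Hom σ x) := by
    rw [Ideal.map_le_iff_le_comap]
    exact fun p hp => (hE p).trans (hxJ p hp)
  refine hxg ?_
  rw [← hE, ← UProd.mk_out (upPolyEmb 𝒰 K g)]
  exact UProd.mk_eq_zero_of_mk_pow_eq_zero <| by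
    simpa only [RingHom.mem_ker, upEval₂Hom, UProd.map_mk, map_pow] using hJE hpowJ

/-- Let `K = ∏_𝒰 K i` be an ultraproduct of fields and `K[Z]_int = ∏_𝒰 (K i)[Z]` the
internal polynomial ring in countably many variables, an extension of `K[Z]` via the
natural embedding `φ`.  For any ideal `I` of `K[Z]` and `g ∈ K[Z]`: if `g^N` lies in the
extension `I·K[Z]_int` for some internal natural number `N ∈ ℕ*` (that is, the internal
element whose `i`-th coordinate is `(φ g)(i)^(N i)` lies in `I·K[Z]_int`), then `g` lies
in the radical `√I` of `I` in `K[Z]`. -/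
theorem mem_radical_of_internal_pow_mem {ι : Type} (𝒰 : Ultrafilter ι)
    (hnp : ∀ i : ι, {i} ∉ (𝒰 : Filter ι))
    (K : ι → Type) [∀ i, Field (K i)]
    (I : Ideal (MvPolynomial ℕ (UProd 𝒰 K)))
    (g : MvPolynomial ℕ (UProd 𝒰 K))
    (N : ι → ℕ)
    (hpow : UProd.mk 𝒰 (fun i => (Quotient.out (upPolyEmb 𝒰 K g)) i ^ N i) ∈
      I.map (upPolyEmb 𝒰 K)) :
    g ∈ I.radical :=
  mem_radical_of_internal_pow_mem_general 𝒰 K I g N hpow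
end
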